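/- The MLOO policy-gradient estimator g = Σ_{i=1}^N ∇_θ log π_θ(τ_i)·RMM_i^MLOO is an unbiased estimator of ∇_θ E[RMM(τ_{1:N−1})], where RMM_i^MLOO = (1/N)Σ_j RMM_{-j} − RMM_{-i}. -/
import Mathlib


open MeasureTheory Finset

/-- **Unbiasedness of the MLOO policy-gradient estimator.**
Let `τ_1,…,τ_{n+1}` be i.i.d. rollouts with density `π θ` (w.r.t. a base measure `μ`),
let `R` be a symmetric function of `n` rollouts, and for a joint sample
`x : Fin (n+1) → α` let `RMM_{-j} = R (x ∘ succAbove j)` be the leave-one-out value.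
Under standard score-function regularity conditions (normalization, zero-mean score,
integrability, and differentiation under the integral sign), the estimator
`g = Σ_i ∇_θ log π_θ(τ_i) · ((1/(n+1)) Σ_j RMM_{-j} − RMM_{-i})` is unbiased for
`∇_θ E[RMM(τ_{1:n})]`: the expectation of `g` under the joint density is the derivative
in `θ` of `t ↦ E_{y ∼ π_t^{⊗ n}}[R(y)]`. -/
theorem mloo_policy_gradient_unbiased
    {α : Type*} [MeasurableSpace α] (μ : Measure α) [SigmaFinite μ]
    (n : ℕ) (hn : 1 ≤ n)
    (π dπ : ℝ → α → ℝ) (θ : ℝ)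
    (R : (Fin n → α) → ℝ)
    (hRsymm : ∀ (y : Fin n → α) (e : Equiv.Perm (Fin n)), R (y ∘ e) = R y)
    (hpos : ∀ τ, 0 < π θ τ)
    (hnorm : ∀ θ', ∫ τ, π θ' τ ∂μ = 1)
    (hderiv : ∀ τ, HasDerivAt (fun t => π t τ) (dπ θ τ) θ)
    (hscore_zero : ∫ τ, dπ θ τ ∂μ = 0)
    (hint : Integrable
      (fun x : Fin (n + 1) → α =>
        (∑ i : Fin (n + 1), (dπ θ (x i) / π θ (x i)) *
          (((n : ℝ) + 1)⁻¹ * (∑ j : Fin (n + 1), R (fun k => x (j.succAbove k)))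
            - R (fun k => x (i.succAbove k))))
          * ∏ i : Fin (n + 1), π θ (x i))
      (Measure.pi fun _ : Fin (n + 1) => μ))
    (hint' : ∀ i j : Fin (n + 1), Integrable
      (fun x : Fin (n + 1) → α =>
        (dπ θ (x i) / π θ (x i)) * R (fun k => x (j.succAbove k))
          * ∏ k : Fin (n + 1), π θ (x k))
      (Measure.pi fun _ : Fin (n + 1) => μ))
    (hinterchange : HasDerivAt
      (fun t => ∫ y : Fin n → α, R y * ∏ k : Fin n, π t (y k)
        ∂(Measure.pi fun _ : Fin n => μ))
      (∫ y : Fin n → α,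
        R y * ∑ k : Fin n, dπ θ (y k) * ∏ m ∈ Finset.univ.erase k, π θ (y m)
        ∂(Measure.pi fun _ : Fin n => μ)) θ) :
    HasDerivAt
      (fun t => ∫ y : Fin n → α, R y * ∏ k : Fin n, π t (y k)
        ∂(Measure.pi fun _ : Fin n => μ))
      (∫ x : Fin (n + 1) → α,
        (∑ i : Fin (n + 1), (dπ θ (x i) / π θ (x i)) *
          (((n : ℝ) + 1)⁻¹ * (∑ j : Fin (n + 1), R (fun k => x (j.succAbove k)))
            - R (fun k => x (i.succAbove k))))
          * ∏ i : Fin (n + 1), π θ (x i)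
        ∂(Measure.pi fun _ : Fin (n + 1) => μ)) θ := by
  classical
  have hμ : μ ≠ 0 := by
    intro h
    have h1 := hnorm θ
    rw [h, integral_zero_measure] at h1
    norm_num at h1
  have haene : (MeasureTheory.ae μ).NeBot := ae_neBot.mpr hμ
  set Pm : Measure (Fin (n+1) → α) := Measure.pi fun _ : Fin (n+1) => μ with hPm
  set ν : Measure (Fin n → α) := Measure.pi fun _ : Fin n => μ with hν
  -- change of variables maps
  have hMP : ∀ j : Fin (n+1), MeasurePreserving
      (fun p : α × (Fin n → α) => (j.insertNth p.1 p.2 : Fin (n+1) → α)) (μ.prod ν) Pm := by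
    intro j
    have he : ((fun p : α × (Fin n → α) => (j.insertNth p.1 p.2 : Fin (n+1) → α)))
        = ⇑(MeasurableEquiv.piFinSuccAbove (fun _ : Fin (n+1) => α) j).symm := by
      funext p; rfl
    rw [he]
    exact (measurePreserving_piFinSuccAbove (fun _ : Fin (n+1) => μ) j).symm
  have hEmb : ∀ j : Fin (n+1), MeasurableEmbedding
      (fun p : α × (Fin n → α) => (j.insertNth p.1 p.2 : Fin (n+1) → α)) := by
    intro j
    have he : ((fun p : α × (Fin n → α) => (j.insertNth p.1 p.2 : Fin (n+1) → α)))
        = ⇑(MeasurableEquiv.piFinSuccAbove (fun _ : Fin (n+1) => α) j).symm := by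
      funext p; rfl
    rw [he]
    exact (MeasurableEquiv.piFinSuccAbove _ j).symm.measurableEmbedding
  have hCVint : ∀ (j : Fin (n+1)) (f : (Fin (n+1) → α) → ℝ),
      ∫ x, f x ∂Pm = ∫ p : α × (Fin n → α), f (j.insertNth p.1 p.2) ∂(μ.prod ν) :=
    fun j f => ((hMP j).integral_comp (hEmb j) f).symm
  have hCVintg : ∀ (j : Fin (n+1)) (f : (Fin (n+1) → α) → ℝ), Integrable f Pm →
      Integrable (fun p : α × (Fin n → α) => f (j.insertNth p.1 p.2)) (μ.prod ν) :=
    fun j f hf => ((hMP j).integrable_comp_emb (hEmb j)).mpr hf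
  -- evaluation lemmas
  have hprod : ∀ (j : Fin (n+1)) (a : α) (y : Fin n → α),
      (∏ i : Fin (n+1), π θ ((j.insertNth a y : Fin (n+1) → α) i)) = π θ a * ∏ k : Fin n, π θ (y k) := by
    intro j a y
    rw [Fin.prod_univ_succAbove (fun i => π θ ((j.insertNth a y : Fin (n+1) → α) i)) j]
    simp
  have hR : ∀ (j : Fin (n+1)) (a : α) (y : Fin n → α),
      R (fun k => (j.insertNth a y : Fin (n+1) → α) (j.succAbove k)) = R y := by
    intro j a y
    congr 1
    funext k
    simp
  -- I2 : the diagonal terms vanish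
  have hI2 : ∀ j : Fin (n+1),
      ∫ x : Fin (n+1) → α, (dπ θ (x j) / π θ (x j)) * R (fun k => x (j.succAbove k))
        * ∏ m : Fin (n+1), π θ (x m) ∂Pm = 0 := by
    intro j
    refine (hCVint j _).trans ?_
    have heq : (fun p : α × (Fin n → α) =>
        (dπ θ ((j.insertNth p.1 p.2 : Fin (n+1) → α) j) / π θ ((j.insertNth p.1 p.2 : Fin (n+1) → α) j))
          * R (fun k => (j.insertNth p.1 p.2 : Fin (n+1) → α) (j.succAbove k))
          * ∏ m : Fin (n+1), π θ ((j.insertNth p.1 p.2 : Fin (n+1) → α) m))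
        = fun p : α × (Fin n → α) => dπ θ p.1 * (R p.2 * ∏ k : Fin n, π θ (p.2 k)) := by
      funext p
      rw [hprod, hR]
      simp only [Fin.insertNth_apply_same]
      rw [div_mul_eq_mul_div, div_mul_eq_mul_div, div_eq_iff (hpos p.1).ne']
      ring
    rw [show (∫ p : α × (Fin n → α),
        (dπ θ ((j.insertNth p.1 p.2 : Fin (n+1) → α) j) / π θ ((j.insertNth p.1 p.2 : Fin (n+1) → α) j))
          * R (fun k => (j.insertNth p.1 p.2 : Fin (n+1) → α) (j.succAbove k))
          * ∏ m : Fin (n+1), π θ ((j.insertNth p.1 p.2 : Fin (n+1) → α) m) ∂(μ.prod ν))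
      = ∫ p : α × (Fin n → α), dπ θ p.1 * (R p.2 * ∏ k : Fin n, π θ (p.2 k)) ∂(μ.prod ν)
      from by rw [heq]]
    exact (integral_prod_mul (fun a : α => dπ θ a)
      (fun y : Fin n → α => R y * ∏ k : Fin n, π θ (y k))).trans
      (by rw [hscore_zero, zero_mul])
  -- off-diagonal terms
  have hA : ∀ (j : Fin (n+1)) (k : Fin n),
      ∫ x : Fin (n+1) → α, (dπ θ (x (j.succAbove k)) / π θ (x (j.succAbove k)))
          * R (fun m => x (j.succAbove m)) * ∏ m : Fin (n+1), π θ (x m) ∂Pm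
        = ∫ y : Fin n → α, R y * (dπ θ (y k) * ∏ m ∈ Finset.univ.erase k, π θ (y m)) ∂ν := by
    intro j k
    refine (hCVint j _).trans ?_
    have heq : (fun p : α × (Fin n → α) =>
        (dπ θ ((j.insertNth p.1 p.2 : Fin (n+1) → α) (j.succAbove k))
            / π θ ((j.insertNth p.1 p.2 : Fin (n+1) → α) (j.succAbove k)))
          * R (fun m => (j.insertNth p.1 p.2 : Fin (n+1) → α) (j.succAbove m))
          * ∏ m : Fin (n+1), π θ ((j.insertNth p.1 p.2 : Fin (n+1) → α) m))
        = fun p : α × (Fin n → α) => π θ p.1 *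
            (R p.2 * (dπ θ (p.2 k) * ∏ m ∈ Finset.univ.erase k, π θ (p.2 m))) := by
      funext p
      rw [hprod, hR]
      simp only [Fin.insertNth_apply_succAbove]
      rw [← Finset.mul_prod_erase Finset.univ (fun m => π θ (p.2 m)) (Finset.mem_univ k)]
      rw [div_mul_eq_mul_div, div_mul_eq_mul_div, div_eq_iff (hpos (p.2 k)).ne']
      ring
    rw [show (∫ p : α × (Fin n → α),
        (dπ θ ((j.insertNth p.1 p.2 : Fin (n+1) → α) (j.succAbove k))
            / π θ ((j.insertNth p.1 p.2 : Fin (n+1) → α) (j.succAbove k)))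
          * R (fun m => (j.insertNth p.1 p.2 : Fin (n+1) → α) (j.succAbove m))
          * ∏ m : Fin (n+1), π θ ((j.insertNth p.1 p.2 : Fin (n+1) → α) m) ∂(μ.prod ν))
      = ∫ p : α × (Fin n → α), π θ p.1 *
            (R p.2 * (dπ θ (p.2 k) * ∏ m ∈ Finset.univ.erase k, π θ (p.2 m))) ∂(μ.prod ν)
      from by rw [heq]]
    exact (integral_prod_mul (fun a : α => π θ a)
      (fun y : Fin n → α => R y * (dπ θ (y k) * ∏ m ∈ Finset.univ.erase k, π θ (y m)))).trans
      (by rw [hnorm θ, one_mul])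
  -- integrability of the leave-one-out pieces
  have hTint : ∀ k : Fin n, Integrable
      (fun y : Fin n → α => R y * (dπ θ (y k) * ∏ m ∈ Finset.univ.erase k, π θ (y m))) ν := by
    intro k
    have h1 := hCVintg 0 _ (hint' ((0 : Fin (n+1)).succAbove k) 0)
    have h2 : (fun p : α × (Fin n → α) =>
        (dπ θ (((0 : Fin (n+1)).insertNth p.1 p.2 : Fin (n+1) → α) ((0 : Fin (n+1)).succAbove k))
            / π θ (((0 : Fin (n+1)).insertNth p.1 p.2 : Fin (n+1) → α) ((0 : Fin (n+1)).succAbove k)))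
          * R (fun m => ((0 : Fin (n+1)).insertNth p.1 p.2 : Fin (n+1) → α) ((0 : Fin (n+1)).succAbove m))
          * ∏ m : Fin (n+1), π θ (((0 : Fin (n+1)).insertNth p.1 p.2 : Fin (n+1) → α) m))
        = fun p : α × (Fin n → α) => π θ p.1 *
            (R p.2 * (dπ θ (p.2 k) * ∏ m ∈ Finset.univ.erase k, π θ (p.2 m))) := by
      funext p
      rw [hprod, hR]
      simp only [Fin.insertNth_apply_succAbove]
      rw [← Finset.mul_prod_erase Finset.univ (fun m => π θ (p.2 m)) (Finset.mem_univ k)]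
      rw [div_mul_eq_mul_div, div_mul_eq_mul_div, div_eq_iff (hpos (p.2 k)).ne']
      ring
    rw [h2] at h1
    obtain ⟨a, ha⟩ := h1.prod_right_ae.exists
    have h3 := ha.const_mul (π θ a)⁻¹
    exact h3.congr (Filter.Eventually.of_forall fun y => by
      simp only [← mul_assoc, inv_mul_cancel₀ (hpos a).ne', one_mul])
  -- the row sums
  have hintg1 : ∀ j : Fin (n+1), Integrable
      (fun x : Fin (n+1) → α => (∑ i : Fin (n+1), dπ θ (x i) / π θ (x i))
        * R (fun m => x (j.succAbove m)) * ∏ m : Fin (n+1), π θ (x m)) Pm := by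
    intro j
    have heq : (fun x : Fin (n+1) → α => (∑ i : Fin (n+1), dπ θ (x i) / π θ (x i))
        * R (fun m => x (j.succAbove m)) * ∏ m : Fin (n+1), π θ (x m))
      = fun x : Fin (n+1) → α => ∑ i : Fin (n+1), (dπ θ (x i) / π θ (x i))
        * R (fun m => x (j.succAbove m)) * ∏ m : Fin (n+1), π θ (x m) := by
      funext x
      rw [Finset.sum_mul, Finset.sum_mul]
    rw [heq]
    exact integrable_finset_sum _ (fun i _ => hint' i j)
  have hI1 : ∀ j : Fin (n+1),
      ∫ x : Fin (n+1) → α, (∑ i : Fin (n+1), dπ θ (x i) / π θ (x i))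
          * R (fun m => x (j.succAbove m)) * ∏ m : Fin (n+1), π θ (x m) ∂Pm
        = ∫ y : Fin n → α, R y * ∑ k : Fin n, dπ θ (y k)
            * ∏ m ∈ Finset.univ.erase k, π θ (y m) ∂ν := by
    intro j
    have heq : (fun x : Fin (n+1) → α => (∑ i : Fin (n+1), dπ θ (x i) / π θ (x i))
        * R (fun m => x (j.succAbove m)) * ∏ m : Fin (n+1), π θ (x m))
      = fun x : Fin (n+1) → α => ∑ i : Fin (n+1), (dπ θ (x i) / π θ (x i))
        * R (fun m => x (j.succAbove m)) * ∏ m : Fin (n+1), π θ (x m) := by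
      funext x
      rw [Finset.sum_mul, Finset.sum_mul]
    rw [show (∫ x : Fin (n+1) → α, (∑ i : Fin (n+1), dπ θ (x i) / π θ (x i))
          * R (fun m => x (j.succAbove m)) * ∏ m : Fin (n+1), π θ (x m) ∂Pm)
        = ∫ x : Fin (n+1) → α, ∑ i : Fin (n+1), (dπ θ (x i) / π θ (x i))
          * R (fun m => x (j.succAbove m)) * ∏ m : Fin (n+1), π θ (x m) ∂Pm
      from by rw [heq]]
    rw [integral_finset_sum _ (fun i _ => hint' i j)]
    rw [Fin.sum_univ_succAbove (fun i => ∫ x : Fin (n+1) → α, (dπ θ (x i) / π θ (x i))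
        * R (fun m => x (j.succAbove m)) * ∏ m : Fin (n+1), π θ (x m) ∂Pm) j]
    rw [hI2 j, zero_add]
    have : ∀ k : Fin n, (∫ x : Fin (n+1) → α, (dπ θ (x (j.succAbove k)) / π θ (x (j.succAbove k)))
          * R (fun m => x (j.succAbove m)) * ∏ m : Fin (n+1), π θ (x m) ∂Pm)
        = ∫ y : Fin n → α, R y * (dπ θ (y k) * ∏ m ∈ Finset.univ.erase k, π θ (y m)) ∂ν :=
      fun k => hA j k
    rw [Finset.sum_congr rfl (fun k _ => this k)]
    rw [← integral_finset_sum _ (fun k _ => hTint k)]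
    congr 1
    funext y
    rw [Finset.mul_sum]
  -- the main decomposition
  have hg : (fun x : Fin (n + 1) → α =>
        (∑ i : Fin (n + 1), (dπ θ (x i) / π θ (x i)) *
          (((n : ℝ) + 1)⁻¹ * (∑ j : Fin (n + 1), R (fun k => x (j.succAbove k)))
            - R (fun k => x (i.succAbove k))))
          * ∏ i : Fin (n + 1), π θ (x i))
      = fun x : Fin (n+1) → α => ∑ j : Fin (n+1),
        (((n : ℝ) + 1)⁻¹ * ((∑ i : Fin (n+1), dπ θ (x i) / π θ (x i))
            * R (fun m => x (j.succAbove m)) * ∏ m : Fin (n+1), π θ (x m))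
          - (dπ θ (x j) / π θ (x j)) * R (fun m => x (j.succAbove m))
            * ∏ m : Fin (n+1), π θ (x m)) := by
    funext x
    rw [Finset.sum_sub_distrib]
    simp only [mul_sub, sub_mul, Finset.sum_sub_distrib, Finset.sum_mul, Finset.mul_sum]
    congr 1
    rw [Finset.sum_comm]
    refine Finset.sum_congr rfl fun j _ => Finset.sum_congr rfl fun i _ => by ring
  have key : (∫ x : Fin (n + 1) → α,
        (∑ i : Fin (n + 1), (dπ θ (x i) / π θ (x i)) *
          (((n : ℝ) + 1)⁻¹ * (∑ j : Fin (n + 1), R (fun k => x (j.succAbove k)))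
            - R (fun k => x (i.succAbove k))))
          * ∏ i : Fin (n + 1), π θ (x i) ∂Pm)
      = ∫ y : Fin n → α,
        R y * ∑ k : Fin n, dπ θ (y k) * ∏ m ∈ Finset.univ.erase k, π θ (y m) ∂ν := by
    rw [show (∫ x : Fin (n + 1) → α,
        (∑ i : Fin (n + 1), (dπ θ (x i) / π θ (x i)) *
          (((n : ℝ) + 1)⁻¹ * (∑ j : Fin (n + 1), R (fun k => x (j.succAbove k)))
            - R (fun k => x (i.succAbove k))))
          * ∏ i : Fin (n + 1), π θ (x i) ∂Pm)
      = ∫ x : Fin (n+1) → α, ∑ j : Fin (n+1),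
        (((n : ℝ) + 1)⁻¹ * ((∑ i : Fin (n+1), dπ θ (x i) / π θ (x i))
            * R (fun m => x (j.succAbove m)) * ∏ m : Fin (n+1), π θ (x m))
          - (dπ θ (x j) / π θ (x j)) * R (fun m => x (j.succAbove m))
            * ∏ m : Fin (n+1), π θ (x m)) ∂Pm
      from by rw [hg]]
    rw [integral_finset_sum (μ := Pm) Finset.univ
      (f := fun (j : Fin (n+1)) (x : Fin (n+1) → α) =>
        ((n : ℝ) + 1)⁻¹ * ((∑ i : Fin (n+1), dπ θ (x i) / π θ (x i))
            * R (fun m => x (j.succAbove m)) * ∏ m : Fin (n+1), π θ (x m))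
          - (dπ θ (x j) / π θ (x j)) * R (fun m => x (j.succAbove m))
            * ∏ m : Fin (n+1), π θ (x m))
      (fun j _ => (((hintg1 j).const_mul (((n : ℝ) + 1)⁻¹)).sub (hint' j j)))]
    have hterm : ∀ j : Fin (n+1),
        (∫ x : Fin (n+1) → α,
          (((n : ℝ) + 1)⁻¹ * ((∑ i : Fin (n+1), dπ θ (x i) / π θ (x i))
              * R (fun m => x (j.succAbove m)) * ∏ m : Fin (n+1), π θ (x m))
            - (dπ θ (x j) / π θ (x j)) * R (fun m => x (j.succAbove m))
              * ∏ m : Fin (n+1), π θ (x m)) ∂Pm)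
        = ((n : ℝ) + 1)⁻¹ * ∫ y : Fin n → α,
            R y * ∑ k : Fin n, dπ θ (y k) * ∏ m ∈ Finset.univ.erase k, π θ (y m) ∂ν := by
      intro j
      rw [integral_sub ((hintg1 j).const_mul (((n : ℝ) + 1)⁻¹)) (hint' j j)]
      rw [integral_const_mul, hI1 j, hI2 j, sub_zero]
    rw [Finset.sum_congr rfl (fun j _ => hterm j)]
    rw [Finset.sum_const, Finset.card_univ, Fintype.card_fin, nsmul_eq_mul]
    have : ((n : ℝ) + 1) ≠ 0 := by positivity
    push_cast
    field_simp
  rw [key]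
  exact hinterchange
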